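/- Let k, k', f, f' ∈ L²(ℝ³×ℝ³; ℂ), and define g(x,z) := −(1/2) ∫_{ℝ³} [ k(x,y)(f(z,y)+f(y,z)) + conj(k(y,z))(f(x,y)+f(y,x)) ] dy and g' analogously with (k', f') in place of (k, f). Then g, g' ∈ L²(ℝ³×ℝ³) with ‖g‖₂ ≤ 2‖k‖₂‖f‖₂, one has ‖g' − g‖₂ ≤ 2( ‖k'−k‖₂‖f'‖₂ + ‖k‖₂‖f'−f‖₂ ), and the diagonal values satisfy ∫_{ℝ³} |g'(x,x) − g(x,x)| dx ≤ 2‖k'−k‖₂‖f'‖₂ + 2‖f'−f‖₂‖k‖₂. -/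

import Mathlib

/-!
Pointwise, `|g(x,z)|` is at most half the sum of four integrals `∫ A(x,y) B(z,y) dy`, where `A` and
`B` run over `|k|`, `|f|` and their transposes. By Cauchy–Schwarz in `y` and Tonelli, such an
integral has `L²(ℝ³×ℝ³)` norm at most `‖A‖₂‖B‖₂`, and its diagonal `x = z` is
`∫∫ A B ≤ ‖A‖₂‖B‖₂`; this gives `‖g‖₂ ≤ 2‖k‖₂‖f‖₂`. The integrand of `g' − g` is the integrand
built from `(k' − k, f')` plus the one built from `(k, f' − f)`, so the same majorant bounds the
difference. Replacing `k, f` by measurable representatives changes `g` only on a null set of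
`(x, z)`, and its diagonal only on a null set of `x`, because almost every slice of a null set
is null.
-/

open MeasureTheory Real
open scoped ENNReal

noncomputable section

abbrev E3 : Type := EuclideanSpace ℝ (Fin 3)

/-- The kernel `g(x,z) = −(1/2)∫ [k(x,y)(f(z,y)+f(y,z)) + conj(k(y,z))(f(x,y)+f(y,x))] dy`. -/
def recKer (k f : E3 × E3 → ℂ) : E3 × E3 → ℂ := fun p =>
  -(1 / 2 : ℂ) * ∫ y : E3,
    (k (p.1, y) * (f (p.2, y) + f (y, p.2))
      + starRingEnd ℂ (k (y, p.2)) * (f (p.1, y) + f (y, p.1)))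

/-- The `L²(ℝ³×ℝ³)` norm of a kernel. -/
def l2n (h : E3 × E3 → ℂ) : ℝ := Real.sqrt (∫ p : E3 × E3, ‖h p‖ ^ 2)

open scoped NNReal

section KernelBounds

variable {α : Type*} [MeasurableSpace α] {μ : Measure α}

lemma eLpNorm_two_sq (φ : α → ℝ≥0∞) : eLpNorm φ 2 μ ^ 2 = ∫⁻ a, φ a ^ 2 ∂μ := by
  simpa using eLpNorm_nnreal_pow_eq_lintegral (f := φ) (μ := μ) (p := 2) two_ne_zero

lemma lintegral_mul_le_eLpNorm_two_mul {φ ψ : α → ℝ≥0∞} (hφ : AEMeasurable φ μ)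
    (hψ : AEMeasurable ψ μ) : ∫⁻ a, φ a * ψ a ∂μ ≤ eLpNorm φ 2 μ * eLpNorm ψ 2 μ := by
  simpa [eLpNorm_eq_lintegral_rpow_enorm_toReal] using
    ENNReal.lintegral_mul_le_Lp_mul_Lq μ .two_two hφ hψ

-- No integrability is needed: a non-integrable side has the junk integral `0`.
lemma enorm_integral_sub_integral_le {E : Type*} [NormedAddCommGroup E] [NormedSpace ℝ E]
    {f g : α → E} (hf : AEStronglyMeasurable f μ) (hg : AEStronglyMeasurable g μ) :
    ‖(∫ a, f a ∂μ) - ∫ a, g a ∂μ‖ₑ ≤ ∫⁻ a, ‖f a - g a‖ₑ ∂μ := by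
  by_cases hfg : Integrable (f - g) μ
  · by_cases hgi : Integrable g μ
    · have hfi : Integrable f μ := by simpa using hfg.add hgi
      rw [← integral_sub hfi hgi]
      exact enorm_integral_le_lintegral_enorm _
    · have hfi : ¬ Integrable f μ := fun hfi => hgi (by simpa using hfi.sub hfg)
      simp [integral_undef hfi, integral_undef hgi]
  · have hinf : ∫⁻ a, ‖f a - g a‖ₑ ∂μ = ⊤ := by
      by_contra h
      exact hfg ⟨hf.sub hg, lt_top_iff_ne_top.2 h⟩
    simp [hinf]

lemma integral_norm_le_toReal_lintegral_enorm {E : Type*} [NormedAddCommGroup E] (g : α → E) :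
    ∫ x, ‖g x‖ ∂μ ≤ (∫⁻ x, ‖g x‖ₑ ∂μ).toReal := by
  by_cases hg : Integrable (fun x => ‖g x‖) μ
  · rw [integral_eq_lintegral_of_nonneg_ae (.of_forall fun _ => norm_nonneg _) hg.1]
    simp_rw [ofReal_norm, le_rfl]
  · rw [integral_undef hg]
    exact ENNReal.toReal_nonneg

variable [SFinite μ]

lemma eLpNorm_comp_swap {φ : α × α → ℝ≥0∞} (hφ : Measurable φ) (p : ℝ≥0∞) :
    eLpNorm (φ ∘ Prod.swap) p (μ.prod μ) = eLpNorm φ p (μ.prod μ) :=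
  eLpNorm_comp_measurePreserving hφ.aestronglyMeasurable Measure.measurePreserving_swap

def rowInner (μ : Measure α) (φ ψ : α × α → ℝ≥0∞) (p : α × α) : ℝ≥0∞ :=
  ∫⁻ y, φ (p.1, y) * ψ (p.2, y) ∂μ

variable {φ ψ : α × α → ℝ≥0∞}

lemma measurable_rowInner (hφ : Measurable φ) (hψ : Measurable ψ) :
    Measurable (rowInner μ φ ψ) :=
  Measurable.lintegral_prod_right'
    (f := fun q : (α × α) × α => φ (q.1.1, q.2) * ψ (q.1.2, q.2)) (by fun_prop)

lemma eLpNorm_rowInner_le (hφ : Measurable φ) (hψ : Measurable ψ) :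
    eLpNorm (rowInner μ φ ψ) 2 (μ.prod μ) ≤ eLpNorm φ 2 (μ.prod μ) * eLpNorm ψ 2 (μ.prod μ) := by
  have hrow : ∀ p : α × α, rowInner μ φ ψ p ^ 2 ≤
      (∫⁻ y, φ (p.1, y) ^ 2 ∂μ) * ∫⁻ y, ψ (p.2, y) ^ 2 ∂μ := fun p => by
    rw [← eLpNorm_two_sq, ← eLpNorm_two_sq, ← mul_pow]
    gcongr
    exact lintegral_mul_le_eLpNorm_two_mul (by fun_prop) (by fun_prop)
  rw [← ENNReal.pow_le_pow_left_iff two_ne_zero]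
  calc eLpNorm (rowInner μ φ ψ) 2 (μ.prod μ) ^ 2
      = ∫⁻ p, rowInner μ φ ψ p ^ 2 ∂(μ.prod μ) := eLpNorm_two_sq _
    _ ≤ ∫⁻ p, (∫⁻ y, φ (p.1, y) ^ 2 ∂μ) * ∫⁻ y, ψ (p.2, y) ^ 2 ∂μ ∂(μ.prod μ) :=
        lintegral_mono hrow
    _ = (∫⁻ x, ∫⁻ y, φ (x, y) ^ 2 ∂μ ∂μ) * ∫⁻ z, ∫⁻ y, ψ (z, y) ^ 2 ∂μ ∂μ :=
        lintegral_prod_mul (hφ.pow_const 2).lintegral_prod_right'.aemeasurable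
          (hψ.pow_const 2).lintegral_prod_right'.aemeasurable
    _ = (eLpNorm φ 2 (μ.prod μ) * eLpNorm ψ 2 (μ.prod μ)) ^ 2 := by
        rw [mul_pow, eLpNorm_two_sq, eLpNorm_two_sq, lintegral_prod _ (hφ.pow_const 2).aemeasurable,
          lintegral_prod _ (hψ.pow_const 2).aemeasurable]

lemma lintegral_rowInner_diag_le (hφ : Measurable φ) (hψ : Measurable ψ) :
    ∫⁻ x, rowInner μ φ ψ (x, x) ∂μ ≤ eLpNorm φ 2 (μ.prod μ) * eLpNorm ψ 2 (μ.prod μ) := by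
  refine (lintegral_mul_le_eLpNorm_two_mul hφ.aemeasurable hψ.aemeasurable).trans_eq' ?_
  exact lintegral_prod (μ := μ) (ν := μ) _ (hφ.mul hψ).aemeasurable

def recMajorant (μ : Measure α) (A B : α × α → ℝ≥0∞) : α × α → ℝ≥0∞ :=
  rowInner μ A B + rowInner μ A (B ∘ Prod.swap) + rowInner μ B (A ∘ Prod.swap)
    + rowInner μ (B ∘ Prod.swap) (A ∘ Prod.swap)

variable {A B : α × α → ℝ≥0∞}

lemma measurable_recMajorant (hA : Measurable A) (hB : Measurable B) :
    Measurable (recMajorant μ A B) :=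
  have hAs := hA.comp measurable_swap
  have hBs := hB.comp measurable_swap
  (((measurable_rowInner hA hB).add (measurable_rowInner hA hBs)).add
    (measurable_rowInner hB hAs)).add (measurable_rowInner hBs hAs)

lemma eLpNorm_recMajorant_le (hA : Measurable A) (hB : Measurable B) :
    eLpNorm (recMajorant μ A B) 2 (μ.prod μ) ≤
      4 * eLpNorm A 2 (μ.prod μ) * eLpNorm B 2 (μ.prod μ) := by
  have hAs := hA.comp measurable_swap
  have hBs := hB.comp measurable_swap
  have m {φ ψ : α × α → ℝ≥0∞} (hφ : Measurable φ) (hψ : Measurable ψ) :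
      AEStronglyMeasurable (rowInner μ φ ψ) (μ.prod μ) :=
    (measurable_rowInner hφ hψ).aestronglyMeasurable
  have h₁ := eLpNorm_rowInner_le (μ := μ) hA hB
  have h₂ := eLpNorm_rowInner_le (μ := μ) hA hBs
  have h₃ := eLpNorm_rowInner_le (μ := μ) hB hAs
  have h₄ := eLpNorm_rowInner_le (μ := μ) hBs hAs
  rw [eLpNorm_comp_swap hB] at h₂ h₄
  rw [eLpNorm_comp_swap hA, mul_comm] at h₃ h₄
  calc eLpNorm (recMajorant μ A B) 2 (μ.prod μ)
      ≤ eLpNorm (rowInner μ A B) 2 (μ.prod μ) + eLpNorm (rowInner μ A (B ∘ Prod.swap)) 2 (μ.prod μ)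
        + eLpNorm (rowInner μ B (A ∘ Prod.swap)) 2 (μ.prod μ)
        + eLpNorm (rowInner μ (B ∘ Prod.swap) (A ∘ Prod.swap)) 2 (μ.prod μ) := by
        refine (eLpNorm_add_le (((m hA hB).add (m hA hBs)).add (m hB hAs)) (m hBs hAs)
          one_le_two).trans (add_le_add_left ?_ _)
        refine (eLpNorm_add_le ((m hA hB).add (m hA hBs)) (m hB hAs) one_le_two).trans
          (add_le_add_left ?_ _)
        exact eLpNorm_add_le (m hA hB) (m hA hBs) one_le_two
    _ ≤ 4 * eLpNorm A 2 (μ.prod μ) * eLpNorm B 2 (μ.prod μ) := by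
        grw [h₁, h₂, h₃, h₄]
        exact le_of_eq (by ring)

lemma lintegral_recMajorant_diag_le (hA : Measurable A) (hB : Measurable B) :
    ∫⁻ x, recMajorant μ A B (x, x) ∂μ ≤ 4 * eLpNorm A 2 (μ.prod μ) * eLpNorm B 2 (μ.prod μ) := by
  have hAs := hA.comp measurable_swap
  have hBs := hB.comp measurable_swap
  have m {φ ψ : α × α → ℝ≥0∞} (hφ : Measurable φ) (hψ : Measurable ψ) :
      Measurable fun x => rowInner μ φ ψ (x, x) :=
    (measurable_rowInner hφ hψ).comp (measurable_id.prodMk measurable_id)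
  have h₁ := lintegral_rowInner_diag_le (μ := μ) hA hB
  have h₂ := lintegral_rowInner_diag_le (μ := μ) hA hBs
  have h₃ := lintegral_rowInner_diag_le (μ := μ) hB hAs
  have h₄ := lintegral_rowInner_diag_le (μ := μ) hBs hAs
  rw [eLpNorm_comp_swap hB] at h₂ h₄
  rw [eLpNorm_comp_swap hA, mul_comm] at h₃ h₄
  simp only [recMajorant, Pi.add_apply]
  rw [lintegral_add_left (((m hA hB).fun_add (m hA hBs)).fun_add (m hB hAs)),
    lintegral_add_left ((m hA hB).fun_add (m hA hBs)), lintegral_add_left (m hA hB)]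
  grw [h₁, h₂, h₃, h₄]
  exact le_of_eq (by ring)

def SlicesAeEq {β : Type*} (μ : Measure α) (g g₀ : α × α → β) (x : α) : Prop :=
  (fun y => g (x, y)) =ᵐ[μ] (fun y => g₀ (x, y)) ∧ (fun y => g (y, x)) =ᵐ[μ] (fun y => g₀ (y, x))

lemma ae_slicesAeEq {β : Type*} {g g₀ : α × α → β} (h : g =ᵐ[μ.prod μ] g₀) :
    ∀ᵐ x ∂μ, SlicesAeEq μ g g₀ x :=
  (Measure.ae_ae_of_ae_prod h).and
    (Measure.ae_ae_of_ae_prod (Measure.measurePreserving_swap.quasiMeasurePreserving.ae_eq h))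

end KernelBounds

section RecKer

def recIntegrand (k f : E3 × E3 → ℂ) (p : E3 × E3) (y : E3) : ℂ :=
  k (p.1, y) * (f (p.2, y) + f (y, p.2)) + starRingEnd ℂ (k (y, p.2)) * (f (p.1, y) + f (y, p.1))

variable {k k' k₀ f f' f₀ : E3 × E3 → ℂ}

lemma recKer_eq_integral (k f : E3 × E3 → ℂ) (p : E3 × E3) :
    recKer k f p = -(1 / 2) * ∫ y, recIntegrand k f p y :=
  rfl

@[simp] lemma recKer_zero_left (f : E3 × E3 → ℂ) : recKer 0 f = 0 := by
  ext p
  simp [recKer]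

lemma recIntegrand_sub (k k' f f' : E3 × E3 → ℂ) (p : E3 × E3) (y : E3) :
    recIntegrand k' f' p y - recIntegrand k f p y =
      recIntegrand (k' - k) f' p y + recIntegrand k (f' - f) p y := by
  simp only [recIntegrand, Pi.sub_apply, map_sub]
  ring

lemma measurable_recIntegrand (hk : Measurable k) (hf : Measurable f) :
    Measurable fun q : (E3 × E3) × E3 => recIntegrand k f q.1 q.2 := by
  unfold recIntegrand
  fun_prop

lemma measurable_recKer (hk : Measurable k) (hf : Measurable f) : Measurable (recKer k f) :=
  (measurable_recIntegrand hk hf).stronglyMeasurable.integral_prod_right'.measurable.const_mul _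

lemma enorm_recIntegrand_le (k f : E3 × E3 → ℂ) (p : E3 × E3) (y : E3) :
    ‖recIntegrand k f p y‖ₑ ≤ ‖k (p.1, y)‖ₑ * ‖f (p.2, y)‖ₑ + ‖k (p.1, y)‖ₑ * ‖f (y, p.2)‖ₑ
      + ‖f (p.1, y)‖ₑ * ‖k (y, p.2)‖ₑ + ‖f (y, p.1)‖ₑ * ‖k (y, p.2)‖ₑ := by
  refine (enorm_add_le _ _).trans ?_
  simp only [enorm_mul, RCLike.enorm_conj]
  grw [enorm_add_le, enorm_add_le]
  exact le_of_eq (by ring)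

lemma lintegral_enorm_recIntegrand_le (hk : Measurable k) (hf : Measurable f) (p : E3 × E3) :
    ∫⁻ y, ‖recIntegrand k f p y‖ₑ ≤ recMajorant volume (‖k ·‖ₑ) (‖f ·‖ₑ) p := by
  refine (lintegral_mono (enorm_recIntegrand_le k f p)).trans_eq ?_
  rw [lintegral_add_left ?_, lintegral_add_left ?_, lintegral_add_left ?_]
  · rfl
  all_goals fun_prop

lemma enorm_recKer_sub_le (hk : Measurable k) (hk' : Measurable k') (hf : Measurable f)
    (hf' : Measurable f') (p : E3 × E3) :
    ‖recKer k' f' p - recKer k f p‖ₑ ≤ 2⁻¹ * (recMajorant volume (‖(k' - k) ·‖ₑ) (‖f' ·‖ₑ) p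
      + recMajorant volume (‖k ·‖ₑ) (‖(f' - f) ·‖ₑ) p) := by
  have hI {a b : E3 × E3 → ℂ} (ha : Measurable a) (hb : Measurable b) :
      Measurable fun y => recIntegrand a b p y :=
    (measurable_recIntegrand ha hb).comp (measurable_const.prodMk measurable_id)
  have half : ‖(-(1 / 2) : ℂ)‖ₑ = 2⁻¹ := by
    rw [enorm_neg, ← ofReal_norm, one_div, norm_inv, ENNReal.ofReal_inv_of_pos (by norm_num)]
    simp
  calc ‖recKer k' f' p - recKer k f p‖ₑ
      = 2⁻¹ * ‖(∫ y, recIntegrand k' f' p y) - ∫ y, recIntegrand k f p y‖ₑ := by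
        rw [recKer_eq_integral, recKer_eq_integral, ← mul_sub, enorm_mul, half]
    _ ≤ 2⁻¹ * ∫⁻ y, ‖recIntegrand (k' - k) f' p y + recIntegrand k (f' - f) p y‖ₑ := by
        simp_rw [← recIntegrand_sub]
        gcongr
        exact enorm_integral_sub_integral_le (hI hk' hf').aestronglyMeasurable
          (hI hk hf).aestronglyMeasurable
    _ ≤ 2⁻¹ * ((∫⁻ y, ‖recIntegrand (k' - k) f' p y‖ₑ)
          + ∫⁻ y, ‖recIntegrand k (f' - f) p y‖ₑ) := by
        rw [← lintegral_add_left (hI (hk'.sub hk) hf').enorm]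
        gcongr with y
        exact enorm_add_le _ _
    _ ≤ _ := by
        gcongr
        · exact lintegral_enorm_recIntegrand_le (hk'.sub hk) hf' p
        · exact lintegral_enorm_recIntegrand_le hk (hf'.sub hf) p

lemma eLpNorm_recKer_sub_le_of_measurable (hk : Measurable k) (hk' : Measurable k')
    (hf : Measurable f) (hf' : Measurable f') :
    eLpNorm (recKer k' f' - recKer k f) 2 volume ≤
      2 * (eLpNorm (k' - k) 2 volume * eLpNorm f' 2 volume
        + eLpNorm k 2 volume * eLpNorm (f' - f) 2 volume) := by
  set M₁ := recMajorant volume (‖(k' - k) ·‖ₑ) (‖f' ·‖ₑ)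
  set M₂ := recMajorant volume (‖k ·‖ₑ) (‖(f' - f) ·‖ₑ)
  have hM₁ : eLpNorm M₁ 2 volume ≤ 4 * eLpNorm (k' - k) 2 volume * eLpNorm f' 2 volume := by
    have := eLpNorm_recMajorant_le (μ := volume) (hk'.sub hk).enorm hf'.enorm
    rwa [eLpNorm_enorm, eLpNorm_enorm] at this
  have hM₂ : eLpNorm M₂ 2 volume ≤ 4 * eLpNorm k 2 volume * eLpNorm (f' - f) 2 volume := by
    have := eLpNorm_recMajorant_le (μ := volume) hk.enorm (hf'.sub hf).enorm
    rwa [eLpNorm_enorm, eLpNorm_enorm] at this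
  calc eLpNorm (recKer k' f' - recKer k f) 2 volume
      ≤ (2⁻¹ : ℝ≥0) • eLpNorm (M₁ + M₂) 2 volume :=
        eLpNorm_le_nnreal_smul_eLpNorm_of_ae_le_mul' (.of_forall fun p => by
          rw [Pi.sub_apply, Pi.add_apply, enorm_eq_self, ENNReal.coe_inv_two]
          exact enorm_recKer_sub_le hk hk' hf hf' p) 2
    _ ≤ 2⁻¹ * (eLpNorm M₁ 2 volume + eLpNorm M₂ 2 volume) := by
        rw [ENNReal.smul_def, smul_eq_mul, ENNReal.coe_inv_two]
        gcongr
        exact eLpNorm_add_le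
          (measurable_recMajorant (hk'.sub hk).enorm hf'.enorm).aestronglyMeasurable
          (measurable_recMajorant hk.enorm (hf'.sub hf).enorm).aestronglyMeasurable one_le_two
    _ ≤ 2⁻¹ * (2 * (2 * (eLpNorm (k' - k) 2 volume * eLpNorm f' 2 volume
        + eLpNorm k 2 volume * eLpNorm (f' - f) 2 volume))) := by
        grw [hM₁, hM₂]
        exact le_of_eq (by ring)
    _ = _ := ENNReal.inv_mul_cancel_left two_ne_zero ENNReal.ofNat_ne_top

lemma lintegral_recKer_diag_sub_le_of_measurable (hk : Measurable k) (hk' : Measurable k')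
    (hf : Measurable f) (hf' : Measurable f') :
    ∫⁻ x, ‖recKer k' f' (x, x) - recKer k f (x, x)‖ₑ ≤
      2 * (eLpNorm (k' - k) 2 volume * eLpNorm f' 2 volume
        + eLpNorm k 2 volume * eLpNorm (f' - f) 2 volume) := by
  set M₁ := recMajorant volume (‖(k' - k) ·‖ₑ) (‖f' ·‖ₑ)
  set M₂ := recMajorant volume (‖k ·‖ₑ) (‖(f' - f) ·‖ₑ)
  have hM₁ : ∫⁻ x, M₁ (x, x) ≤ 4 * eLpNorm (k' - k) 2 volume * eLpNorm f' 2 volume := by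
    have := lintegral_recMajorant_diag_le (μ := volume) (hk'.sub hk).enorm hf'.enorm
    rwa [eLpNorm_enorm, eLpNorm_enorm] at this
  have hM₂ : ∫⁻ x, M₂ (x, x) ≤ 4 * eLpNorm k 2 volume * eLpNorm (f' - f) 2 volume := by
    have := lintegral_recMajorant_diag_le (μ := volume) hk.enorm (hf'.sub hf).enorm
    rwa [eLpNorm_enorm, eLpNorm_enorm] at this
  have hdiag : Measurable fun x : E3 => (x, x) := measurable_id.prodMk measurable_id
  have hM₁m : Measurable fun x => M₁ (x, x) :=
    (measurable_recMajorant (hk'.sub hk).enorm hf'.enorm).comp hdiag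
  have hM₂m : Measurable fun x => M₂ (x, x) :=
    (measurable_recMajorant hk.enorm (hf'.sub hf).enorm).comp hdiag
  calc ∫⁻ x, ‖recKer k' f' (x, x) - recKer k f (x, x)‖ₑ
      ≤ ∫⁻ x, 2⁻¹ * (M₁ (x, x) + M₂ (x, x)) :=
        lintegral_mono fun x => enorm_recKer_sub_le hk hk' hf hf' (x, x)
    _ = 2⁻¹ * ((∫⁻ x, M₁ (x, x)) + ∫⁻ x, M₂ (x, x)) := by
        rw [lintegral_const_mul _ (hM₁m.fun_add hM₂m), lintegral_add_left hM₁m]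
    _ ≤ 2⁻¹ * (2 * (2 * (eLpNorm (k' - k) 2 volume * eLpNorm f' 2 volume
        + eLpNorm k 2 volume * eLpNorm (f' - f) 2 volume))) := by
        grw [hM₁, hM₂]
        exact le_of_eq (by ring)
    _ = _ := ENNReal.inv_mul_cancel_left two_ne_zero ENNReal.ofNat_ne_top

lemma recKer_eq_of_slicesAeEq {x z : E3}
    (hx : SlicesAeEq volume k k₀ x ∧ SlicesAeEq volume f f₀ x)
    (hz : SlicesAeEq volume k k₀ z ∧ SlicesAeEq volume f f₀ z) :
    recKer k f (x, z) = recKer k₀ f₀ (x, z) := by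
  rw [recKer_eq_integral, recKer_eq_integral]
  congr 1
  refine integral_congr_ae ?_
  filter_upwards [hx.1.1, hz.1.2, hx.2.1, hx.2.2, hz.2.1, hz.2.2] with y h₁ h₂ h₃ h₄ h₅ h₆
  simp only [recIntegrand, h₁, h₂, h₃, h₄, h₅, h₆]

lemma recKer_ae_eq (hk : k =ᵐ[volume] k₀) (hf : f =ᵐ[volume] f₀) :
    recKer k f =ᵐ[volume] recKer k₀ f₀ := by
  have h := (ae_slicesAeEq hk).and (ae_slicesAeEq hf)
  filter_upwards [Measure.quasiMeasurePreserving_fst.ae h, Measure.quasiMeasurePreserving_snd.ae h]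
    with p hx hz
  exact recKer_eq_of_slicesAeEq hx hz

lemma recKer_diag_ae_eq (hk : k =ᵐ[volume] k₀) (hf : f =ᵐ[volume] f₀) :
    (fun x => recKer k f (x, x)) =ᵐ[volume] fun x => recKer k₀ f₀ (x, x) := by
  filter_upwards [(ae_slicesAeEq hk).and (ae_slicesAeEq hf)] with x hx
  exact recKer_eq_of_slicesAeEq hx hx

lemma aestronglyMeasurable_recKer (hk : AEStronglyMeasurable k volume)
    (hf : AEStronglyMeasurable f volume) : AEStronglyMeasurable (recKer k f) volume :=
  (measurable_recKer hk.measurable_mk hf.measurable_mk).aestronglyMeasurable.congr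
    (recKer_ae_eq hk.ae_eq_mk hf.ae_eq_mk).symm

lemma eLpNorm_recKer_sub_le (hk : AEStronglyMeasurable k volume)
    (hk' : AEStronglyMeasurable k' volume) (hf : AEStronglyMeasurable f volume)
    (hf' : AEStronglyMeasurable f' volume) :
    eLpNorm (recKer k' f' - recKer k f) 2 volume ≤
      2 * (eLpNorm (k' - k) 2 volume * eLpNorm f' 2 volume
        + eLpNorm k 2 volume * eLpNorm (f' - f) 2 volume) := by
  have h := eLpNorm_recKer_sub_le_of_measurable hk.measurable_mk hk'.measurable_mk
    hf.measurable_mk hf'.measurable_mk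
  rwa [eLpNorm_congr_ae ((recKer_ae_eq hk'.ae_eq_mk hf'.ae_eq_mk).sub
      (recKer_ae_eq hk.ae_eq_mk hf.ae_eq_mk)),
    eLpNorm_congr_ae (hk'.ae_eq_mk.sub hk.ae_eq_mk), eLpNorm_congr_ae hf'.ae_eq_mk,
    eLpNorm_congr_ae hk.ae_eq_mk, eLpNorm_congr_ae (hf'.ae_eq_mk.sub hf.ae_eq_mk)]

lemma lintegral_recKer_diag_sub_le (hk : AEStronglyMeasurable k volume)
    (hk' : AEStronglyMeasurable k' volume) (hf : AEStronglyMeasurable f volume)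
    (hf' : AEStronglyMeasurable f' volume) :
    ∫⁻ x, ‖recKer k' f' (x, x) - recKer k f (x, x)‖ₑ ≤
      2 * (eLpNorm (k' - k) 2 volume * eLpNorm f' 2 volume
        + eLpNorm k 2 volume * eLpNorm (f' - f) 2 volume) := by
  have h := lintegral_recKer_diag_sub_le_of_measurable hk.measurable_mk hk'.measurable_mk
    hf.measurable_mk hf'.measurable_mk
  rw [eLpNorm_congr_ae (hk'.ae_eq_mk.sub hk.ae_eq_mk), eLpNorm_congr_ae hf'.ae_eq_mk,
    eLpNorm_congr_ae hk.ae_eq_mk, eLpNorm_congr_ae (hf'.ae_eq_mk.sub hf.ae_eq_mk)]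
  refine (lintegral_congr_ae ?_).trans_le h
  filter_upwards [recKer_diag_ae_eq hk'.ae_eq_mk hf'.ae_eq_mk,
    recKer_diag_ae_eq hk.ae_eq_mk hf.ae_eq_mk] with x h' h
  rw [h', h]

lemma eLpNorm_recKer_le (hk : AEStronglyMeasurable k volume)
    (hf : AEStronglyMeasurable f volume) :
    eLpNorm (recKer k f) 2 volume ≤ 2 * eLpNorm k 2 volume * eLpNorm f 2 volume := by
  simpa [mul_assoc] using eLpNorm_recKer_sub_le (k := 0) (f := 0) aestronglyMeasurable_zero hk
    aestronglyMeasurable_zero hf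

lemma memLp_recKer (hk : MemLp k 2 volume) (hf : MemLp f 2 volume) :
    MemLp (recKer k f) 2 volume :=
  ⟨aestronglyMeasurable_recKer hk.1 hf.1,
    (eLpNorm_recKer_le hk.1 hf.1).trans_lt (by finiteness [hk.2, hf.2])⟩

end RecKer

lemma l2n_eq_toReal_eLpNorm {g : E3 × E3 → ℂ} (hg : AEStronglyMeasurable g volume) :
    l2n g = (eLpNorm g 2 volume).toReal := by
  rw [toReal_eLpNorm hg, lpNorm_eq_integral_norm_rpow_toReal two_ne_zero ENNReal.ofNat_ne_top hg,
    l2n, Real.sqrt_eq_rpow]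
  norm_num

lemma toReal_le_two_mul_add {x a b c d : ℝ≥0∞} (h : x ≤ 2 * (a * b + c * d)) (ha : a ≠ ⊤)
    (hb : b ≠ ⊤) (hc : c ≠ ⊤) (hd : d ≠ ⊤) :
    x.toReal ≤ 2 * (a.toReal * b.toReal + c.toReal * d.toReal) := by
  refine (ENNReal.toReal_mono (by finiteness) h).trans_eq ?_
  rw [ENNReal.toReal_mul, ENNReal.toReal_add (by finiteness) (by finiteness)]
  simp

theorem stmt8 (k k' f f' : E3 × E3 → ℂ)
    (hk : MemLp k 2 (volume : Measure (E3 × E3)))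
    (hk' : MemLp k' 2 (volume : Measure (E3 × E3)))
    (hf : MemLp f 2 (volume : Measure (E3 × E3)))
    (hf' : MemLp f' 2 (volume : Measure (E3 × E3))) :
    MemLp (recKer k f) 2 (volume : Measure (E3 × E3)) ∧
    MemLp (recKer k' f') 2 (volume : Measure (E3 × E3)) ∧
    l2n (recKer k f) ≤ 2 * l2n k * l2n f ∧
    l2n (fun p => recKer k' f' p - recKer k f p) ≤
      2 * (l2n (fun p => k' p - k p) * l2n f' + l2n k * l2n (fun p => f' p - f p)) ∧
    (∫ x : E3, ‖recKer k' f' (x, x) - recKer k f (x, x)‖) ≤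
      2 * l2n (fun p => k' p - k p) * l2n f' + 2 * l2n (fun p => f' p - f p) * l2n k := by
  have hg := memLp_recKer hk hf
  have hg' := memLp_recKer hk' hf'
  have hdk := hk'.sub hk
  have hdf := hf'.sub hf
  have hdiff := eLpNorm_recKer_sub_le hk.1 hk'.1 hf.1 hf'.1
  have hdiag := lintegral_recKer_diag_sub_le hk.1 hk'.1 hf.1 hf'.1
  rw [show (fun p => recKer k' f' p - recKer k f p) = recKer k' f' - recKer k f from rfl,
    show (fun p => k' p - k p) = k' - k from rfl, show (fun p => f' p - f p) = f' - f from rfl]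
  refine ⟨hg, hg', ?_, ?_, ?_⟩
  · rw [l2n_eq_toReal_eLpNorm hg.1, l2n_eq_toReal_eLpNorm hk.1, l2n_eq_toReal_eLpNorm hf.1]
    refine (ENNReal.toReal_mono (by finiteness [hk.2, hf.2]) (eLpNorm_recKer_le hk.1 hf.1)).trans_eq
      (by simp)
  · rw [l2n_eq_toReal_eLpNorm (hg'.sub hg).1, l2n_eq_toReal_eLpNorm hdk.1,
      l2n_eq_toReal_eLpNorm hf'.1, l2n_eq_toReal_eLpNorm hk.1, l2n_eq_toReal_eLpNorm hdf.1]
    exact toReal_le_two_mul_add hdiff hdk.2.ne hf'.2.ne hk.2.ne hdf.2.ne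
  · rw [l2n_eq_toReal_eLpNorm hdk.1, l2n_eq_toReal_eLpNorm hf'.1, l2n_eq_toReal_eLpNorm hk.1,
      l2n_eq_toReal_eLpNorm hdf.1]
    refine (integral_norm_le_toReal_lintegral_enorm _).trans ?_
    refine (toReal_le_two_mul_add hdiag hdk.2.ne hf'.2.ne hk.2.ne hdf.2.ne).trans_eq ?_
    ring
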